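/- Let W : ℝⁿ → ℝ (n ≥ 2) be a Schwartz function such that ∫_ℝ W(x + tω) dt = 0 for all x ∈ ℝⁿ and all unit vectors ω. Then W = 0. (Injectivity of the X-ray transform on Schwartz functions.) -/

import Mathlib

/-!
If `⟪ω, ξ⟫ = 0`, the character `v ↦ 𝐞 (-⟪v, ξ⟫)` is constant along every line in direction `ω`,
so slicing the Fourier integral of `W` into such lines (Fubini in coordinates adapted to `ω`)
gives `𝓕 W ξ = 0`. In dimension at least two every `ξ` has a unit vector orthogonal to it,
hence `𝓕 W = 0`, and Fourier inversion gives `W = 0`.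
-/

open MeasureTheory Measure FourierTransform Module
open scoped RealInnerProductSpace

section Slicing

variable {E G : Type*} [NormedAddCommGroup E] [NormedSpace ℝ E] [FiniteDimensional ℝ E]
  [NormedAddCommGroup G] [NormedSpace ℝ G]

noncomputable def prodEquivOfIsComplSpanSingleton {ω : E} (hω : ω ≠ 0) {K : Submodule ℝ E}
    (hK : IsCompl K (ℝ ∙ ω)) : (K × ℝ) ≃L[ℝ] E :=
  ((LinearEquiv.prodCongr (LinearEquiv.refl ℝ K)
    (LinearEquiv.toSpanNonzeroSingleton ℝ E ω hω)).trans
      (Submodule.prodEquivOfIsCompl K _ hK)).toContinuousLinearEquiv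

lemma prodEquivOfIsComplSpanSingleton_apply {ω : E} (hω : ω ≠ 0) {K : Submodule ℝ E}
    (hK : IsCompl K (ℝ ∙ ω)) (p : K × ℝ) :
    prodEquivOfIsComplSpanSingleton hω hK p = p.1 + p.2 • ω := by
  simp [prodEquivOfIsComplSpanSingleton]

/-- Any Haar measure on `E` is a multiple of the image of `addHaar ⊗ volume` under
`prodEquivOfIsComplSpanSingleton`, so Fubini applies to it. -/
theorem integral_eq_zero_of_forall_integral_line_eq_zero [MeasurableSpace E] [BorelSpace E]
    (μ : Measure E) [IsAddHaarMeasure μ] {F : E → G} (hF : Integrable F μ) {ω : E} (hω : ω ≠ 0)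
    (h : ∀ x, ∫ t : ℝ, F (x + t • ω) = 0) : ∫ x, F x ∂μ = 0 := by
  obtain ⟨K, hK⟩ := Submodule.exists_isCompl (ℝ ∙ ω)
  set L := prodEquivOfIsComplSpanSingleton hω hK.symm
  set ν := (addHaar : Measure K).prod (volume : Measure ℝ)
  have hμ : μ = μ.addHaarScalarFactor (ν.map L) • ν.map L := isAddLeftInvariant_eq_smul _ _
  have hν : ν.map L = (ν.map L).addHaarScalarFactor μ • μ := isAddLeftInvariant_eq_smul _ _
  have hFL : Integrable (F ∘ L) ν :=
    (integrable_map_equiv L.toHomeomorph.toMeasurableEquiv F).1 (hν ▸ hF.smul_measure_nnreal)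
  have hmap : ∫ x, F x ∂(ν.map L) = ∫ p, (F ∘ L) p ∂ν :=
    integral_map_equiv L.toHomeomorph.toMeasurableEquiv F
  have hslices : ∫ p, (F ∘ L) p ∂ν = 0 := by
    rw [integral_prod _ hFL]
    simp [L, prodEquivOfIsComplSpanSingleton_apply, h]
  rw [hμ, integral_smul_nnreal_measure, hmap, hslices, smul_zero]

end Slicing

theorem exists_norm_eq_one_inner_eq_zero {E : Type*} [NormedAddCommGroup E]
    [InnerProductSpace ℝ E] [FiniteDimensional ℝ E] (hE : 2 ≤ finrank ℝ E) (ξ : E) :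
    ∃ ω : E, ‖ω‖ = 1 ∧ ⟪ω, ξ⟫ = 0 := by
  have : Nontrivial (ℝ ∙ ξ)ᗮ := by
    apply nontrivial_of_finrank_pos (R := ℝ)
    have := (ℝ ∙ ξ).finrank_add_finrank_orthogonal
    have := finrank_span_le_card (R := ℝ) ({ξ} : Set E)
    simp only [Set.toFinset_singleton, Finset.card_singleton] at this
    omega
  obtain ⟨ω, hω⟩ := exists_norm_eq (ℝ ∙ ξ)ᗮ zero_le_one
  exact ⟨ω, hω, Submodule.mem_orthogonal_singleton_iff_inner_left.mp ω.2⟩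

namespace Real

variable {V E : Type*} [NormedAddCommGroup V] [InnerProductSpace ℝ V] [FiniteDimensional ℝ V]
  [MeasurableSpace V] [BorelSpace V] [NormedAddCommGroup E] [NormedSpace ℂ E]

theorem fourier_eq_zero_of_forall_integral_line_eq_zero {f : V → E} (hf : Integrable f)
    {ω ξ : V} (hω : ω ≠ 0) (hωξ : ⟪ω, ξ⟫ = 0) (h : ∀ x, ∫ t : ℝ, f (x + t • ω) = 0) :
    𝓕 f ξ = 0 := by
  rw [fourier_eq]
  refine integral_eq_zero_of_forall_integral_line_eq_zero volume
    ((fourierIntegral_convergent_iff ξ).2 hf) hω fun x => ?_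
  have hphase : ∀ t : ℝ, ⟪x + t • ω, ξ⟫ = ⟪x, ξ⟫ := fun t => by
    rw [inner_add_left, real_inner_smul_left, hωξ, mul_zero, add_zero]
  simp only [hphase, Circle.smul_def, integral_smul, h, smul_zero]

theorem eq_zero_of_fourier_eq_zero [CompleteSpace E] {f : V → E} (hc : Continuous f)
    (hf : Integrable f) (h : 𝓕 f = 0) : f = 0 := by
  rw [← hc.fourierInv_fourier_eq hf (h ▸ integrable_zero _ _ _), h]
  ext v
  simp [fourierInv_eq]

end Real

/-- Injectivity of the X-ray transform on Schwartz functions: if all line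
integrals of a Schwartz function `W` on `ℝⁿ`, `n ≥ 2`, vanish, then `W = 0`. -/
theorem xray_injective (n : ℕ) (hn : 2 ≤ n)
    (W : SchwartzMap (EuclideanSpace ℝ (Fin n)) ℝ)
    (hW : ∀ ω : EuclideanSpace ℝ (Fin n), ‖ω‖ = 1 →
      ∀ x : EuclideanSpace ℝ (Fin n), (∫ t : ℝ, W (x + t • ω)) = 0) :
    W = 0 := by
  set f : EuclideanSpace ℝ (Fin n) → ℂ := fun x => (W x : ℂ)
  have hf : Integrable f := W.integrable.ofReal
  have hline : ∀ ω, ‖ω‖ = 1 → ∀ x, ∫ t : ℝ, f (x + t • ω) = 0 := fun ω hω x => by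
    simp only [f]
    rw [integral_complex_ofReal, hW ω hω x, Complex.ofReal_zero]
  have hfourier : 𝓕 f = 0 := by
    ext ξ
    obtain ⟨ω, hω, hωξ⟩ := exists_norm_eq_one_inner_eq_zero (by simpa using hn) ξ
    exact Real.fourier_eq_zero_of_forall_integral_line_eq_zero hf
      (norm_ne_zero_iff.mp (hω ▸ one_ne_zero)) hωξ (hline ω hω)
  have hf0 : f = 0 :=
    Real.eq_zero_of_fourier_eq_zero (Complex.continuous_ofReal.comp W.continuous) hf hfourier
  ext x
  exact Complex.ofReal_eq_zero.mp (congrFun hf0 x)
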